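/- arXiv:math/0506358 — 3 statements merged into one kernel-verified Lean document; each statement's English description precedes it below -/
import Mathlib

section
/- The number of permutations of {1,…,n} avoiding the barred pattern 3-1̄-42 equals the n-th Bell number: |S_n(3-1̄-42)| = B_n, where B_n is the number of set partitions of an n-element set. -/
/-- One step of Patience Sorting: place card `c` on the leftmost pile whose top
(head) is larger than `c`, or start a new pile on the right.  Piles are stored
top-first, so each pile is an increasing list whose head is the top (smallest) card. -/
def PSinsert (c : ℕ) : List (List ℕ) → List (List ℕ)
  | [] => [[c]]
  | [] :: ps => [] :: PSinsert c ps
  | (x :: p) :: ps =>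
      if c < x then (c :: x :: p) :: ps else (x :: p) :: PSinsert c ps

/-- The pile configuration `R(w)` produced by Patience Sorting applied to the word `w`. -/
def PSpiles (w : List ℕ) : List (List ℕ) :=
  w.foldl (fun ps c => PSinsert c ps) []

/-- The one-line word (with values `1,…,n`) of a permutation of `Fin n`. -/
def permWord {n : ℕ} (σ : Equiv.Perm (Fin n)) : List ℕ :=
  List.ofFn fun i => (σ i : ℕ) + 1

/-- `AvoidsBarred σ`: the permutation avoids the barred pattern 3-1̄-42, i.e., every
occurrence of 2-31 (0-based positions `i < j` with `w(j+1) < w(i) < w(j)`, where `w` is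
the one-line word of `σ`) is contained in an occurrence of 3-1-42 (there is `k` with
`i < k < j` and `w(k) < w(j+1)`). -/
def AvoidsBarred {n : ℕ} (σ : Equiv.Perm (Fin n)) : Prop :=
  ∀ i j : ℕ, i < j → j + 1 < n →
    (permWord σ).getD (j + 1) 0 < (permWord σ).getD i 0 →
    (permWord σ).getD i 0 < (permWord σ).getD j 0 →
    ∃ k, i < k ∧ k < j ∧ (permWord σ).getD k 0 < (permWord σ).getD (j + 1) 0

/-!
A word avoids 3-1̄-42 exactly when each ascent bottom is smaller than every later letter: a 2-31
occurrence `b ⋯ c a` contains an ascent between `b` and `c`, whose bottom lies below `a` and so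
supplies the `1`; conversely, the first letter below an ascent bottom would close a 2-31 with
nothing smaller in between. Cutting such a permutation into its maximal decreasing runs yields
blocks whose minima (the ascent bottoms) lie below every later letter, i.e. a set partition with
each block written decreasingly and the blocks listed by increasing minima; every set partition
is written this way in exactly one way.
-/

section IndexConditions

variable {α : Type*} [LinearOrder α] {f : ℕ → α} {n : ℕ}

def AvoidsBarredOn (f : ℕ → α) (n : ℕ) : Prop :=
  ∀ i j, i < j → j + 1 < n → f (j + 1) < f i → f i < f j →
    ∃ k, i < k ∧ k < j ∧ f k < f (j + 1)

def AscentBottomsLeastOn (f : ℕ → α) (n : ℕ) : Prop :=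
  ∀ i k, i < k → k < n → f i < f (i + 1) → f i < f k

theorem exists_ascent_of_lt {i j : ℕ} (hij : i < j) (hlt : f i < f j) :
    ∃ m, i ≤ m ∧ m < j ∧ f m < f (m + 1) := by
  induction j, hij using Nat.le_induction with
  | base => exact ⟨i, le_rfl, lt_add_one i, hlt⟩
  | succ j hij ih =>
    rcases lt_or_ge (f j) (f (j + 1)) with hasc | hdesc
    · exact ⟨j, by omega, lt_add_one j, hasc⟩
    · obtain ⟨m, him, hmj, hasc⟩ := ih (hlt.trans_le hdesc)
      exact ⟨m, him, hmj.trans (lt_add_one j), hasc⟩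

theorem AscentBottomsLeastOn.avoidsBarredOn (h : AscentBottomsLeastOn f n) :
    AvoidsBarredOn f n := by
  intro i j hij hjn hlow hhigh
  obtain ⟨m, him, hmj, hasc⟩ := exists_ascent_of_lt hij hhigh
  have hm : f m < f (j + 1) := h m (j + 1) (by omega) hjn hasc
  rcases him.eq_or_lt with rfl | him
  · exact absurd hlow hm.asymm
  · exact ⟨m, him, hmj, hm⟩

-- By strong induction on `k`, the letter before `f k` is above `f i`, so `f k < f i` would be a
-- 2-31 whose `1` contradicts the induction hypothesis.
theorem AvoidsBarredOn.ascentBottomsLeastOn (hf : Set.InjOn f (Set.Iio n))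
    (h : AvoidsBarredOn f n) : AscentBottomsLeastOn f n := by
  intro i k hik hkn hasc
  induction k using Nat.strong_induction_on with
  | _ k ih =>
    rcases (Nat.succ_le_of_lt hik).eq_or_lt with rfl | hik'
    · exact hasc
    obtain ⟨j, rfl⟩ : ∃ j, k = j + 1 := ⟨k - 1, by omega⟩
    have hprev : f i < f j := ih j (lt_add_one j) (by omega) (by omega)
    refine (lt_or_gt_of_ne fun heq => ?_).resolve_right fun hlow => ?_
    · exact hik.ne (hf (Set.mem_Iio.2 (by omega)) (Set.mem_Iio.2 hkn) heq)
    · obtain ⟨m, him, hmj, hm⟩ := h i j (by omega) hkn hlow hprev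
      exact (ih m (by omega) him (by omega)).asymm (hm.trans hlow)

theorem ascentBottomsLeastOn_succ :
    AscentBottomsLeastOn f (n + 1) ↔
      AscentBottomsLeastOn (fun i => f (i + 1)) n ∧
        (f 0 < f 1 → ∀ k, k < n → f 0 < f (k + 1)) := by
  constructor
  · intro h
    exact ⟨fun i k hik hkn => h (i + 1) (k + 1) (by omega) (by omega),
      fun hasc k hk => h 0 (k + 1) k.succ_pos (by omega) hasc⟩
  · rintro ⟨htail, hhead⟩ i k hik hkn hasc
    obtain ⟨k, rfl⟩ : ∃ k', k = k' + 1 := ⟨k - 1, by omega⟩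
    cases i with
    | zero => exact hhead hasc k (by omega)
    | succ i => exact htail i k (by omega) (by omega) hasc

theorem avoidsBarredOn_iff (hf : Set.InjOn f (Set.Iio n)) :
    AvoidsBarredOn f n ↔ AscentBottomsLeastOn f n :=
  ⟨AvoidsBarredOn.ascentBottomsLeastOn hf, AscentBottomsLeastOn.avoidsBarredOn⟩

end IndexConditions

section Words

variable {α β : Type*} [LinearOrder α] [LinearOrder β]

def AscentBottomsLeast : List α → Prop
  | [] => True
  | a :: t => AscentBottomsLeast t ∧ ∀ b ∈ t.head?, a < b → ∀ x ∈ t, a < x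

theorem ascentBottomsLeast_iff_getD (w : List α) (d : α) :
    AscentBottomsLeast w ↔ AscentBottomsLeastOn (w.getD · d) w.length := by
  induction w with
  | nil => simp [AscentBottomsLeast, AscentBottomsLeastOn]
  | cons a t ih =>
    simp only [AscentBottomsLeast, List.length_cons, ascentBottomsLeastOn_succ,
      List.getD_cons_succ, List.getD_cons_zero, ← ih]
    refine and_congr_right' ?_
    cases t with
    | nil => simp
    | cons b t =>
      simp only [List.head?_cons, Option.mem_def, Option.some.injEq, forall_eq']
      refine imp_congr_right fun _ => ⟨fun h k hk => ?_, fun h x hx => ?_⟩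
      · exact h _ (List.getD_eq_getElem _ d hk ▸ List.getElem_mem hk)
      · obtain ⟨k, hk, rfl⟩ := List.getElem_of_mem hx
        simpa only [List.getD_eq_getElem _ d hk] using h k hk

theorem ascentBottomsLeast_map {f : α → β} (hf : StrictMono f) (w : List α) :
    AscentBottomsLeast (w.map f) ↔ AscentBottomsLeast w := by
  induction w with
  | nil => simp [AscentBottomsLeast]
  | cons a t ih =>
    simp [AscentBottomsLeast, ih, hf.lt_iff_lt]

end Words

section Permutations

variable {n : ℕ}

theorem permWord_eq_map (σ : Equiv.Perm (Fin n)) :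
    permWord σ = (List.ofFn σ).map fun a => a.val + 1 := by
  rw [permWord, List.map_ofFn]; rfl

theorem permWord_getD (σ : Equiv.Perm (Fin n)) {i : ℕ} (hi : i < n) :
    (permWord σ).getD i 0 = σ ⟨i, hi⟩ + 1 := by
  simp [permWord, hi]

theorem avoidsBarred_iff (σ : Equiv.Perm (Fin n)) :
    AvoidsBarred σ ↔ AscentBottomsLeast (List.ofFn σ) := by
  have hinj : Set.InjOn (fun i => (permWord σ).getD i 0) (Set.Iio n) := fun i hi j hj h => by
    simp only [permWord_getD σ hi, permWord_getD σ hj, add_left_inj, Fin.val_inj] at h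
    exact Fin.mk.inj (σ.injective h)
  have hlen : (permWord σ).length = n := by simp [permWord]
  rw [← ascentBottomsLeast_map (f := fun a : Fin n => a.val + 1) (fun a b h => by simpa),
    ← permWord_eq_map, ascentBottomsLeast_iff_getD _ 0, hlen]
  -- `AvoidsBarred σ` unfolds to `AvoidsBarredOn ((permWord σ).getD · 0) n`.
  exact avoidsBarredOn_iff hinj

end Permutations

section Blocks

variable {α : Type*} [LinearOrder α]

def descRuns (w : List α) : List (List α) := w.splitBy fun a b => b < a

theorem flatten_descRuns (w : List α) : (descRuns w).flatten = w := List.flatten_splitBy _ w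

structure IsStandardBlocks (L : List (List α)) : Prop where
  nil_notMem : [] ∉ L
  isChain : ∀ r ∈ L, r.IsChain (· > ·)
  pairwise : L.Pairwise fun r s => ∀ y ∈ s, ∃ x ∈ r, x < y

theorem IsStandardBlocks.of_cons {r : List α} {L : List (List α)}
    (h : IsStandardBlocks (r :: L)) : IsStandardBlocks L :=
  ⟨fun hL => h.nil_notMem (List.mem_cons_of_mem r hL),
    fun s hs => h.isChain s (List.mem_cons_of_mem r hs), h.pairwise.of_cons⟩

theorem getLast_le_of_isChain_gt {r : List α} (hr : r.IsChain (· > ·)) (hne : r ≠ []) {x : α}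
    (hx : x ∈ r) : r.getLast hne ≤ x :=
  hr.backwards_induction (r.getLast hne ≤ ·) r (fun _ _ hyz hz => hz.trans hyz.le)
    (fun _ => le_rfl) x hx

theorem ascentBottomsLeast_append {r u : List α} (hr : r.IsChain (· > ·)) :
    AscentBottomsLeast (r ++ u) ↔
      AscentBottomsLeast u ∧ ∀ a ∈ r.getLast?, ∀ b ∈ u.head?, a < b → ∀ x ∈ u, a < x := by
  induction r with
  | nil => simp
  | cons a r ih =>
    cases r with
    | nil => simp [AscentBottomsLeast]
    | cons c r =>
      have hca : c < a := (List.isChain_cons_cons.1 hr).1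
      rw [List.cons_append, AscentBottomsLeast, ih hr.tail, List.getLast?_cons_cons]
      simp [hca.asymm, hca.le]

theorem ascentBottomsLeast_flatten {L : List (List α)} (h : IsStandardBlocks L) :
    AscentBottomsLeast L.flatten := by
  induction L with
  | nil => trivial
  | cons r L ih =>
    rw [List.flatten_cons, ascentBottomsLeast_append (h.isChain r List.mem_cons_self)]
    refine ⟨ih h.of_cons, fun a ha _ _ _ x hx => ?_⟩
    obtain ⟨s, hs, hxs⟩ := List.mem_flatten.1 hx
    obtain ⟨y, hy, hyx⟩ := List.rel_of_pairwise_cons h.pairwise hs x hxs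
    rw [← List.getLast_of_mem_getLast? ha]
    exact (getLast_le_of_isChain_gt (h.isChain r List.mem_cons_self) _ hy).trans_lt hyx

-- The hypotheses on `L` are those `List.splitBy` guarantees for `descRuns L.flatten`.
theorem pairwise_of_ascentBottomsLeast_flatten {L : List (List α)} (hnil : [] ∉ L)
    (hchain : ∀ r ∈ L, r.IsChain (· > ·))
    (hjunction : L.IsChain fun r s => ∃ hr hs, decide (s.head hs < r.getLast hr) = false)
    (hnodup : L.flatten.Nodup) (h : AscentBottomsLeast L.flatten) :
    L.Pairwise fun r s => ∀ y ∈ s, ∃ x ∈ r, x < y := by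
  induction L with
  | nil => exact List.Pairwise.nil
  | cons r L ih =>
    rw [List.flatten_cons] at hnodup h
    rw [ascentBottomsLeast_append (hchain r List.mem_cons_self)] at h
    refine List.pairwise_cons.2 ⟨?_, ih (fun hL => hnil (List.mem_cons_of_mem r hL))
      (fun s hs => hchain s (List.mem_cons_of_mem r hs)) hjunction.tail
      (List.nodup_append.1 hnodup).2.1 h.1⟩
    cases L with
    | nil => simp
    | cons s L =>
      obtain ⟨hr, hs, hrs⟩ := (List.isChain_cons_cons.1 hjunction).1
      obtain ⟨b, s, rfl⟩ := List.exists_cons_of_ne_nil hs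
      have hlt : r.getLast hr < b := by
        refine lt_of_le_of_ne (not_lt.1 (of_decide_eq_false hrs)) fun heq => ?_
        exact (List.nodup_append.1 hnodup).2.2 _ (List.getLast_mem hr) b (by simp) heq
      have hbelow := h.2 _ (List.getLast_mem_getLast? hr) b (by simp) hlt
      exact fun t ht y hy => ⟨_, List.getLast_mem hr, hbelow y (List.mem_flatten_of_mem ht hy)⟩

theorem isStandardBlocks_descRuns_iff {w : List α} (hw : w.Nodup) :
    IsStandardBlocks (descRuns w) ↔ AscentBottomsLeast w := by
  refine ⟨fun h => flatten_descRuns w ▸ ascentBottomsLeast_flatten h, fun h => ?_⟩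
  have hchain : ∀ r ∈ descRuns w, r.IsChain (· > ·) := fun r hr => by
    simpa using List.isChain_of_mem_splitBy hr
  refine ⟨List.nil_notMem_splitBy _ w, hchain, ?_⟩
  exact pairwise_of_ascentBottomsLeast_flatten (List.nil_notMem_splitBy _ w) hchain
    (List.isChain_getLast_head_splitBy (fun a b => b < a) w)
    (by rwa [flatten_descRuns]) (by rwa [flatten_descRuns])

theorem descRuns_flatten {L : List (List α)} (h : IsStandardBlocks L) :
    descRuns L.flatten = L := by
  refine List.splitBy_flatten h.nil_notMem (fun r hr => by simpa using h.isChain r hr) ?_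
  refine (h.pairwise.imp_of_mem fun {r s} hr hs hrs => ?_).isChain
  have hr' : r ≠ [] := fun h' => h.nil_notMem (h' ▸ hr)
  have hs' : s ≠ [] := fun h' => h.nil_notMem (h' ▸ hs)
  obtain ⟨x, hx, hxs⟩ := hrs _ (List.head_mem hs')
  exact ⟨hr', hs', by simpa using (getLast_le_of_isChain_gt (h.isChain r hr) hr' hx).trans hxs.le⟩

end Blocks

@[ext]
structure StandardBlockList (α : Type*) [LinearOrder α] where
  blocks : List (List α)
  isStandardBlocks : IsStandardBlocks blocks
  nodup : blocks.flatten.Nodup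
  mem_flatten : ∀ x, x ∈ blocks.flatten

section AvoidingPermutations

variable {n : ℕ}

theorem exists_perm_ofFn_eq {w : List (Fin n)} (hnd : w.Nodup) (hall : ∀ x, x ∈ w) :
    ∃ σ : Equiv.Perm (Fin n), List.ofFn σ = w := by
  let e := hnd.getEquivOfForallMemList w hall
  have hlen : w.length = n := by simpa using Fintype.card_congr e
  exact ⟨(finCongr hlen.symm).trans e, (List.ofFn_congr hlen w.get).symm.trans (List.ofFn_get w)⟩

def standardBlocksOfAvoiding (σ : {σ : Equiv.Perm (Fin n) // AvoidsBarred σ}) :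
    StandardBlockList (Fin n) where
  blocks := descRuns (List.ofFn σ.1)
  isStandardBlocks := (isStandardBlocks_descRuns_iff (List.nodup_ofFn.2 σ.1.injective)).2
    ((avoidsBarred_iff σ.1).1 σ.2)
  nodup := by rw [flatten_descRuns]; exact List.nodup_ofFn.2 σ.1.injective
  mem_flatten x := by simp [flatten_descRuns, List.mem_ofFn, σ.1.surjective x]

theorem bijective_standardBlocksOfAvoiding :
    Function.Bijective (standardBlocksOfAvoiding (n := n)) := by
  constructor
  · rintro ⟨σ, _⟩ ⟨τ, _⟩ h
    have hflat := congrArg (·.blocks.flatten) h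
    simp only [standardBlocksOfAvoiding, flatten_descRuns] at hflat
    exact Subtype.ext (DFunLike.coe_injective (List.ofFn_injective hflat))
  · rintro ⟨L, hL, hnd, hall⟩
    obtain ⟨σ, hσ⟩ := exists_perm_ofFn_eq hnd hall
    have havoid : AvoidsBarred σ := by
      rw [avoidsBarred_iff, hσ, ← isStandardBlocks_descRuns_iff hnd, descRuns_flatten hL]
      exact hL
    exact ⟨⟨σ, havoid⟩, StandardBlockList.ext (by simp [standardBlocksOfAvoiding, hσ,
      descRuns_flatten hL])⟩

end AvoidingPermutations

section Partitions

open Finset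

variable {α : Type*} [LinearOrder α]

theorem List.eq_of_mem_of_nodup_flatten {L : List (List α)} (hnd : L.flatten.Nodup)
    {r s : List α} (hr : r ∈ L) (hs : s ∈ L) {a : α} (har : a ∈ r) (has : a ∈ s) : r = s := by
  by_contra hne
  have : Std.Symm (α := List α) List.Disjoint := ⟨fun _ _ h => h.symm⟩
  exact (List.nodup_flatten.1 hnd).2.forall hr hs hne har has

theorem Finset.isChain_sort_ge (t : Finset α) : (t.sort (· ≥ ·)).IsChain (· > ·) :=
  (((t.pairwise_sort _).and (t.sort_nodup _)).imp fun h => lt_of_le_of_ne h.1 (Ne.symm h.2)).isChain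

theorem IsStandardBlocks.map_sort_toFinset {L : List (List α)} (h : IsStandardBlocks L) :
    (L.map List.toFinset).map (·.sort (· ≥ ·)) = L := by
  rw [List.map_map]
  refine (List.map_congr_left fun r hr => ?_).trans (List.map_id L)
  have hr' : r.Pairwise (· > ·) := List.isChain_iff_pairwise.1 (h.isChain r hr)
  exact (List.toFinset_sort _ hr'.nodup).2 (hr'.imp le_of_lt)

theorem IsStandardBlocks.pairwise_min_lt {L : List (List α)} (h : IsStandardBlocks L) :
    (L.map List.toFinset).Pairwise fun s t => s.min < t.min := by
  rw [List.pairwise_map]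
  refine h.pairwise.imp_of_mem fun {r s} _ hs hrs => ?_
  obtain ⟨m, hm⟩ := Finset.min_of_nonempty (s := s.toFinset)
    (List.toFinset_nonempty_iff s |>.2 fun h' => h.nil_notMem (h' ▸ hs))
  obtain ⟨x, hx, hxm⟩ := hrs m (List.mem_toFinset.1 (Finset.mem_of_min hm))
  exact hm ▸ (Finset.min_le (List.mem_toFinset.2 hx)).trans_lt (WithTop.coe_lt_coe.2 hxm)

variable [Fintype α]

def StandardBlockList.toFinpartition (L : StandardBlockList α) : Finpartition (univ : Finset α) :=
  Finpartition.ofExistsUnique ((L.blocks.map List.toFinset).toFinset) (fun _ _ => subset_univ _)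
    (fun a _ => by
      obtain ⟨r, hr, har⟩ := List.mem_flatten.1 (L.mem_flatten a)
      refine ⟨r.toFinset, ⟨by simpa using ⟨r, hr, rfl⟩, by simpa using har⟩, ?_⟩
      rintro t ⟨ht, hat⟩
      obtain ⟨s, hs, rfl⟩ := List.mem_map.1 (List.mem_toFinset.1 ht)
      rw [List.eq_of_mem_of_nodup_flatten L.nodup hs hr (List.mem_toFinset.1 hat) har])
    (by simpa using L.isStandardBlocks.nil_notMem)

-- A standard block list is recovered from its set of blocks: sorting the blocks by their
-- minima fixes their order, and each block is its own decreasing sort.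
theorem StandardBlockList.toFinpartition_injective :
    Function.Injective (StandardBlockList.toFinpartition (α := α)) := by
  intro L L' h
  have hparts := congrArg Finpartition.parts h
  simp only [StandardBlockList.toFinpartition, Finpartition.ofExistsUnique_parts] at hparts
  have : Std.Irrefl fun s t : Finset α => s.min < t.min := ⟨fun _ => lt_irrefl _⟩
  have : Std.Antisymm fun s t : Finset α => s.min < t.min := ⟨fun _ _ h h' => (h.asymm h').elim⟩
  have hmap : L.blocks.map List.toFinset = L'.blocks.map List.toFinset :=
    L.isStandardBlocks.pairwise_min_lt.eq_of_mem_iff L'.isStandardBlocks.pairwise_min_lt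
      fun t => by simpa using congrArg (t ∈ ·) hparts
  exact StandardBlockList.ext (L.isStandardBlocks.map_sort_toFinset.symm.trans
    (hmap ▸ L'.isStandardBlocks.map_sort_toFinset))

noncomputable def Finpartition.partsByMin (P : Finpartition (univ : Finset α)) :
    List (Finset α) :=
  P.parts.toList.insertionSort fun s t => s.min ≤ t.min

theorem Finpartition.mem_partsByMin {P : Finpartition (univ : Finset α)} {t : Finset α} :
    t ∈ P.partsByMin ↔ t ∈ P.parts := by
  rw [Finpartition.partsByMin, (List.perm_insertionSort _ _).mem_iff, Finset.mem_toList]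

theorem Finpartition.nodup_partsByMin (P : Finpartition (univ : Finset α)) :
    P.partsByMin.Nodup :=
  (List.perm_insertionSort _ _).nodup_iff.2 (Finset.nodup_toList _)

theorem Finpartition.pairwise_min_lt_partsByMin (P : Finpartition (univ : Finset α)) :
    P.partsByMin.Pairwise fun s t => s.min < t.min := by
  have : Std.Total fun s t : Finset α => s.min ≤ t.min := ⟨fun _ _ => le_total _ _⟩
  have : IsTrans (Finset α) fun s t => s.min ≤ t.min := ⟨fun _ _ _ => le_trans⟩
  refine ((List.pairwise_insertionSort _ _).and P.nodup_partsByMin).imp_of_mem ?_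
  rintro s t hs ht ⟨hle, hne⟩
  refine hle.lt_of_ne fun heq => ?_
  obtain ⟨m, hm⟩ := Finset.min_of_nonempty (P.nonempty_of_mem_parts (mem_partsByMin.1 hs))
  exact Finset.disjoint_left.1 (P.disjoint (mem_partsByMin.1 hs) (mem_partsByMin.1 ht) hne)
    (Finset.mem_of_min hm) (Finset.mem_of_min (heq ▸ hm))

theorem Finpartition.isStandardBlocks_partsByMin (P : Finpartition (univ : Finset α)) :
    IsStandardBlocks (P.partsByMin.map (·.sort (· ≥ ·))) where
  nil_notMem := by
    simp only [List.mem_map, not_exists, not_and]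
    intro t ht hnil
    have htoFinset := Finset.sort_toFinset t (· ≥ ·)
    rw [hnil, List.toFinset_nil] at htoFinset
    exact (P.nonempty_of_mem_parts (mem_partsByMin.1 ht)).ne_empty htoFinset.symm
  isChain := by
    simp only [List.mem_map]
    rintro _ ⟨t, -, rfl⟩
    exact t.isChain_sort_ge
  pairwise := by
    rw [List.pairwise_map]
    refine P.pairwise_min_lt_partsByMin.imp_of_mem fun {s t} hs _ hst y hy => ?_
    have hs' := P.nonempty_of_mem_parts (mem_partsByMin.1 hs)
    refine ⟨s.min' hs', (mem_sort _).2 (s.min'_mem hs'), WithTop.coe_lt_coe.1 ?_⟩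
    exact (Finset.coe_min' hs').symm ▸ hst.trans_le (Finset.min_le ((mem_sort _).1 hy))

theorem Finpartition.nodup_flatten_partsByMin (P : Finpartition (univ : Finset α)) :
    (P.partsByMin.map (·.sort (· ≥ ·))).flatten.Nodup := by
  refine List.nodup_flatten.2 ⟨?_, ?_⟩
  · simp only [List.mem_map]
    rintro _ ⟨t, -, rfl⟩
    exact Finset.sort_nodup t _
  · rw [List.pairwise_map]
    refine P.nodup_partsByMin.imp_of_mem fun {s t} hs ht hst x hxs hxt => ?_
    exact Finset.disjoint_left.1 (P.disjoint (mem_partsByMin.1 hs) (mem_partsByMin.1 ht) hst)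
      ((mem_sort _).1 hxs) ((mem_sort _).1 hxt)

noncomputable def Finpartition.toStandardBlockList (P : Finpartition (univ : Finset α)) :
    StandardBlockList α where
  blocks := P.partsByMin.map (·.sort (· ≥ ·))
  isStandardBlocks := P.isStandardBlocks_partsByMin
  nodup := P.nodup_flatten_partsByMin
  mem_flatten x := by
    obtain ⟨t, ht, hxt⟩ := P.exists_mem (mem_univ x)
    exact List.mem_flatten.2 ⟨_, List.mem_map_of_mem (mem_partsByMin.2 ht), (mem_sort _).2 hxt⟩

theorem Finpartition.toFinpartition_toStandardBlockList (P : Finpartition (univ : Finset α)) :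
    P.toStandardBlockList.toFinpartition = P := by
  ext t
  simp [StandardBlockList.toFinpartition, Finpartition.toStandardBlockList, mem_partsByMin]

theorem StandardBlockList.bijective_toFinpartition :
    Function.Bijective (StandardBlockList.toFinpartition (α := α)) :=
  ⟨toFinpartition_injective, fun P => ⟨P.toStandardBlockList, P.toFinpartition_toStandardBlockList⟩⟩

end Partitions

/-- The number of permutations of `{1,…,n}` avoiding the barred pattern
3-1̄-42 equals the `n`-th Bell number, i.e., the number of set partitions of an
`n`-element set (here: finpartitions of `Fin n`). -/
theorem stmt15 (n : ℕ) :
    Nat.card {σ : Equiv.Perm (Fin n) // AvoidsBarred σ} =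
      Nat.card (Finpartition (Finset.univ : Finset (Fin n))) :=
  (Nat.card_eq_of_bijective _ bijective_standardBlocksOfAvoiding).trans
    (Nat.card_eq_of_bijective _ StandardBlockList.bijective_toFinpartition)
end

section
/- Every set partition of {1,…,n} arises as the set of piles of the Patience Sorting pile configuration of some permutation; consequently, the number of distinct pile configurations R(σ) as σ ranges over S_n equals the n-th Bell number B_n. -/
/-!
Write the blocks of a set partition in increasing order of their minima, each block in
decreasing order. Patience Sorting turns this word into one pile per block: every card of a
block is larger than the tops of the piles built from earlier blocks (which are their minima)
and smaller than the top of the pile its block has started. Conversely, every configuration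
produced by Patience Sorting consists of nonempty increasing piles with increasing tops, and
such a configuration is determined by its set of piles. Hence `R(σ) ↦ {piles of R(σ)}` is a
bijection onto the set partitions of `{1,…,n}`.
-/

lemma Finset.head?_sort_eq {α : Type*} [LinearOrder α] {t : Finset α} {m : α} (hm : m ∈ t)
    (hmin : ∀ b ∈ t, m ≤ b) : t.sort.head? = some m := by
  rw [← Finset.insert_erase hm,
    Finset.sort_insert _ (fun b hb => hmin b (Finset.mem_of_mem_erase hb))
      (Finset.notMem_erase m t)]
  rfl

lemma List.eq_of_pairwise_lt_of_toFinset_eq {α : Type*} [LinearOrder α] {p q : List α}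
    (hp : p.Pairwise (· < ·)) (hq : q.Pairwise (· < ·)) (h : p.toFinset = q.toFinset) : p = q :=
  hp.eq_of_mem_iff hq fun a => by rw [← List.mem_toFinset, h, List.mem_toFinset]

def pileSet {α : Type*} [DecidableEq α] (R : List (List α)) : Finset (Finset α) :=
  (R.map List.toFinset).toFinset

lemma exists_finpartition_parts_eq_pileSet {α : Type*} [DecidableEq α] {s : Finset α}
    {R : List (List α)} (hR : ∀ p ∈ R, p ≠ []) (hnodup : R.flatten.Nodup)
    (hs : ∀ a, a ∈ R.flatten ↔ a ∈ s) :
    ∃ P : Finpartition s, P.parts = pileSet R := by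
  have hdisj : R.Pairwise List.Disjoint := (List.nodup_flatten.mp hnodup).2
  refine ⟨Finpartition.ofExistsUnique (pileSet R) ?_ ?_ ?_, rfl⟩
  · simp only [pileSet, List.mem_toFinset, List.mem_map]
    rintro _ ⟨p, hp, rfl⟩ a ha
    exact (hs a).mp (List.mem_flatten.mpr ⟨p, hp, List.mem_toFinset.mp ha⟩)
  · intro a ha
    obtain ⟨p, hp, hap⟩ := List.mem_flatten.mp ((hs a).mpr ha)
    refine ⟨p.toFinset, ⟨by simpa [pileSet] using ⟨p, hp, rfl⟩, by simpa using hap⟩, ?_⟩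
    simp only [pileSet, List.mem_toFinset, List.mem_map]
    rintro _ ⟨⟨q, hq, rfl⟩, haq⟩
    by_contra hne
    have : Std.Symm (List.Disjoint (α := α)) := ⟨fun _ _ h => h.symm⟩
    exact hdisj.forall hq hp (by rintro rfl; exact hne rfl) (List.mem_toFinset.mp haq) hap
  · simp only [pileSet, List.mem_toFinset, List.mem_map, List.toFinset_eq_empty_iff]
    rintro ⟨p, hp, rfl⟩
    exact hR [] hp rfl

def PSpilesFrom (ps : List (List ℕ)) (w : List ℕ) : List (List ℕ) :=
  w.foldl (fun ps c => PSinsert c ps) ps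

@[simp] lemma PSpilesFrom_nil (ps : List (List ℕ)) : PSpilesFrom ps [] = ps := rfl

@[simp] lemma PSpilesFrom_cons (ps : List (List ℕ)) (c : ℕ) (w : List ℕ) :
    PSpilesFrom ps (c :: w) = PSpilesFrom (PSinsert c ps) w := rfl

@[simp] lemma PSpilesFrom_append (ps : List (List ℕ)) (w w' : List ℕ) :
    PSpilesFrom ps (w ++ w') = PSpilesFrom (PSpilesFrom ps w) w' :=
  List.foldl_append

lemma PSinsert_append {c : ℕ} {qs : List (List ℕ)} (hqs : ∀ q ∈ qs, ∀ x ∈ q.head?, x < c)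
    (rs : List (List ℕ)) : PSinsert c (qs ++ rs) = qs ++ PSinsert c rs := by
  induction qs with
  | nil => rfl
  | cons q qs ih =>
    have ih := ih fun q' hq' => hqs q' (List.mem_cons_of_mem q hq')
    rcases q with _ | ⟨x, q⟩
    · simp [PSinsert, ih]
    · have hxc : ¬ c < x := not_lt.mpr (hqs _ List.mem_cons_self x rfl).le
      simp [PSinsert, hxc, ih]

lemma PSpilesFrom_reverse {ps : List (List ℕ)} {p : List ℕ} (hp : p ≠ [])
    (hsorted : p.Pairwise (· < ·)) (hps : ∀ q ∈ ps, ∀ x ∈ q.head?, ∀ a ∈ p, x < a) :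
    PSpilesFrom ps p.reverse = ps ++ [p] := by
  induction p with
  | nil => exact absurd rfl hp
  | cons a p ih =>
    have hps_a : ∀ q ∈ ps, ∀ x ∈ q.head?, x < a := fun q hq x hx => hps q hq x hx a (by simp)
    rw [List.reverse_cons, PSpilesFrom_append]
    rcases p with _ | ⟨y, p⟩
    · simpa [PSinsert] using PSinsert_append hps_a []
    · rw [ih (List.cons_ne_nil y p) (List.pairwise_cons.mp hsorted).2
        fun q hq x hx b hb => hps q hq x hx b (List.mem_cons_of_mem a hb)]
      have hay : a < y := (List.pairwise_cons.mp hsorted).1 y (by simp)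
      simp [PSinsert_append hps_a, PSinsert, hay]

lemma PSpilesFrom_flatMap_reverse {R : List (List ℕ)}
    (hR : ∀ p ∈ R, p ≠ [] ∧ p.Pairwise (· < ·))
    (hsep : R.Pairwise fun p q => ∀ x ∈ p.head?, ∀ a ∈ q, x < a) {ps : List (List ℕ)}
    (hps : ∀ q ∈ ps, ∀ x ∈ q.head?, ∀ p ∈ R, ∀ a ∈ p, x < a) :
    PSpilesFrom ps (R.flatMap List.reverse) = ps ++ R := by
  induction R generalizing ps with
  | nil => simp
  | cons p R ih =>
    obtain ⟨hp, hsorted⟩ := hR p List.mem_cons_self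
    rw [List.flatMap_cons, PSpilesFrom_append,
      PSpilesFrom_reverse hp hsorted fun q hq x hx a ha => hps q hq x hx p List.mem_cons_self a ha,
      ih (fun p' hp' => hR p' (List.mem_cons_of_mem p hp')) (List.pairwise_cons.mp hsep).2]
    · simp
    · intro q hq x hx p' hp' a ha
      rcases List.mem_append.mp hq with hq | hq
      · exact hps q hq x hx p' (List.mem_cons_of_mem _ hp') a ha
      · rw [List.mem_singleton.mp hq] at hx
        exact (List.pairwise_cons.mp hsep).1 p' hp' x hx a ha

lemma PSpiles_flatMap_reverse {R : List (List ℕ)}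
    (hR : ∀ p ∈ R, p ≠ [] ∧ p.Pairwise (· < ·))
    (hsep : R.Pairwise fun p q => ∀ x ∈ p.head?, ∀ a ∈ q, x < a) :
    PSpiles (R.flatMap List.reverse) = R :=
  PSpilesFrom_flatMap_reverse hR hsep (by simp)

lemma PSinsert_flatten_perm (c : ℕ) (ps : List (List ℕ)) :
    (PSinsert c ps).flatten.Perm (c :: ps.flatten) := by
  fun_induction PSinsert c ps with
  | case4 x p ps _ ih =>
    exact (((ih.append_left p).trans List.perm_middle).cons x).trans (List.Perm.swap c x _)
  | _ => simp_all

lemma PSpilesFrom_flatten_perm (ps : List (List ℕ)) (w : List ℕ) :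
    (PSpilesFrom ps w).flatten.Perm (w ++ ps.flatten) := by
  induction w generalizing ps with
  | nil => simp
  | cons c w ih =>
    exact (ih _).trans (((PSinsert_flatten_perm c ps).append_left w).trans List.perm_middle)

lemma PSpiles_flatten_perm (w : List ℕ) : (PSpiles w).flatten.Perm w := by
  have h := PSpilesFrom_flatten_perm [] w
  rwa [List.flatten_nil, List.append_nil] at h

lemma tops_PSinsert_subset (c : ℕ) (ps : List (List ℕ)) :
    (PSinsert c ps).map (·.headD 0) ⊆ c :: ps.map (·.headD 0) := by
  fun_induction PSinsert c ps <;> grind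

def IsPileConfig (R : List (List ℕ)) : Prop :=
  (∀ p ∈ R, p ≠ [] ∧ p.Pairwise (· < ·)) ∧ (R.map (·.headD 0)).Pairwise (· < ·)

lemma isPileConfig_nil : IsPileConfig [] := by simp [IsPileConfig]

lemma isPileConfig_cons {p : List ℕ} {ps : List (List ℕ)} :
    IsPileConfig (p :: ps) ↔
      p ≠ [] ∧ p.Pairwise (· < ·) ∧ (∀ q ∈ ps, p.headD 0 < q.headD 0) ∧ IsPileConfig ps := by
  simp only [IsPileConfig, List.forall_mem_cons, List.map_cons, List.pairwise_cons,
    List.forall_mem_map]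
  tauto

lemma isPileConfig_PSinsert {c : ℕ} {ps : List (List ℕ)} (h : IsPileConfig ps)
    (hc : c ∉ ps.flatten) : IsPileConfig (PSinsert c ps) := by
  induction ps with
  | nil => simp [PSinsert, isPileConfig_cons, isPileConfig_nil]
  | cons p ps ih =>
    obtain ⟨hp, hsorted, htops, hps⟩ := isPileConfig_cons.mp h
    obtain ⟨x, p, rfl⟩ := List.exists_cons_of_ne_nil hp
    by_cases hcx : c < x
    · rw [PSinsert, if_pos hcx]
      refine isPileConfig_cons.mpr ⟨List.cons_ne_nil _ _,
        List.pairwise_cons.mpr ⟨fun a ha => ?_, hsorted⟩, fun q hq => hcx.trans (htops q hq), hps⟩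
      rcases List.mem_cons.mp ha with rfl | ha
      exacts [hcx, hcx.trans (List.rel_of_pairwise_cons hsorted ha)]
    · have hxc : x < c := lt_of_le_of_ne (not_lt.mp hcx) (by rintro rfl; simp at hc)
      rw [PSinsert, if_neg hcx]
      refine isPileConfig_cons.mpr ⟨hp, hsorted, fun q hq => ?_, ih hps (by simp_all)⟩
      rcases List.mem_cons.mp (tops_PSinsert_subset c ps (List.mem_map_of_mem hq)) with h | h
      · rwa [h]
      · obtain ⟨q', hq', h⟩ := List.mem_map.mp h
        exact h ▸ htops q' hq'

lemma isPileConfig_PSpilesFrom {ps : List (List ℕ)} {w : List ℕ} (h : IsPileConfig ps)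
    (hw : w.Nodup) (hdisj : ∀ c ∈ w, c ∉ ps.flatten) : IsPileConfig (PSpilesFrom ps w) := by
  induction w generalizing ps with
  | nil => exact h
  | cons c w ih =>
    obtain ⟨hcw, hw⟩ := List.nodup_cons.mp hw
    refine ih (isPileConfig_PSinsert h (hdisj c List.mem_cons_self)) hw fun a ha ha' => ?_
    rcases List.mem_cons.mp ((PSinsert_flatten_perm c ps).mem_iff.mp ha') with rfl | ha'
    exacts [hcw ha, hdisj a (List.mem_cons_of_mem c ha) ha']

lemma isPileConfig_PSpiles {w : List ℕ} (hw : w.Nodup) : IsPileConfig (PSpiles w) :=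
  isPileConfig_PSpilesFrom isPileConfig_nil hw (by simp)

lemma isPileConfig_of_pairwise {R : List (List ℕ)} (hR : ∀ p ∈ R, p ≠ [] ∧ p.Pairwise (· < ·))
    (hsep : R.Pairwise fun p q => ∀ x ∈ p.head?, ∀ a ∈ q, x < a) : IsPileConfig R := by
  refine ⟨hR, List.pairwise_map.mpr (hsep.imp_of_mem fun {p q} hp hq h => ?_)⟩
  obtain ⟨x, p, rfl⟩ := List.exists_cons_of_ne_nil (hR _ hp).1
  obtain ⟨y, q, rfl⟩ := List.exists_cons_of_ne_nil (hR _ hq).1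
  exact h x rfl y List.mem_cons_self

lemma IsPileConfig.eq_of_pileSet_eq {R R' : List (List ℕ)} (hR : IsPileConfig R)
    (hR' : IsPileConfig R') (h : pileSet R = pileSet R') : R = R' := by
  have mem_of_mem {S S'} (hS : IsPileConfig S) (hS' : IsPileConfig S')
      (h : pileSet S = pileSet S') (p) (hp : p ∈ S) : p ∈ S' := by
    have : p.toFinset ∈ pileSet S' := h ▸ List.mem_toFinset.mpr (List.mem_map_of_mem hp)
    obtain ⟨q, hq, hpq⟩ := List.mem_map.mp (List.mem_toFinset.mp this)
    exact List.eq_of_pairwise_lt_of_toFinset_eq (hS'.1 q hq).2 (hS.1 p hp).2 hpq ▸ hq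
  have : Std.Irrefl fun p q : List ℕ => p.headD 0 < q.headD 0 := ⟨fun _ => lt_irrefl _⟩
  exact (List.pairwise_map.mp hR.2).eq_of_mem_iff (List.pairwise_map.mp hR'.2)
    fun p => ⟨mem_of_mem hR hR' h p, mem_of_mem hR' hR h.symm p⟩

namespace Finpartition

variable {α : Type*} [LinearOrder α] {s : Finset α} (P : Finpartition s)

def minima : Finset α := s.filter fun m => ∀ b ∈ P.part m, m ≤ b

def piles : List (List α) := P.minima.sort.map fun m => (P.part m).sort

variable {P}

lemma mem_minima {m : α} : m ∈ P.minima ↔ m ∈ s ∧ ∀ b ∈ P.part m, m ≤ b := Finset.mem_filter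

lemma exists_mem_minima_part_eq {t : Finset α} (ht : t ∈ P.parts) :
    ∃ m ∈ P.minima, P.part m = t := by
  have hne := P.nonempty_of_mem_parts ht
  have hmt := t.min'_mem hne
  have hpart := P.part_eq_of_mem ht hmt
  refine ⟨t.min' hne, mem_minima.mpr ⟨P.le ht hmt, fun b hb => ?_⟩, hpart⟩
  exact t.min'_le b (hpart ▸ hb)

lemma eq_of_mem_minima_of_part_eq {m m' : α} (hm : m ∈ P.minima) (hm' : m' ∈ P.minima)
    (h : P.part m = P.part m') : m = m' := by
  rw [mem_minima] at hm hm'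
  exact le_antisymm (hm.2 m' (h ▸ P.mem_part_self.mpr hm'.1))
    (hm'.2 m (h ▸ P.mem_part_self.mpr hm.1))

lemma head?_sort_part {m : α} (hm : m ∈ P.minima) : (P.part m).sort.head? = some m :=
  Finset.head?_sort_eq (P.mem_part_self.mpr (mem_minima.mp hm).1) (mem_minima.mp hm).2

lemma piles_ne_nil_and_pairwise_lt {p : List α} (hp : p ∈ P.piles) :
    p ≠ [] ∧ p.Pairwise (· < ·) := by
  obtain ⟨m, hm, rfl⟩ := List.mem_map.mp hp
  refine ⟨fun h => ?_, (Finset.sortedLT_sort _).pairwise⟩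
  simpa [h] using head?_sort_part (Finset.mem_sort _ |>.mp hm)

lemma piles_pairwise :
    P.piles.Pairwise fun p q => ∀ x ∈ p.head?, ∀ a ∈ q, x < a := by
  refine List.pairwise_map.mpr ((Finset.sortedLT_sort _).pairwise.imp_of_mem ?_)
  intro m m' hm hm' hlt x hx a ha
  rw [Finset.mem_sort] at hm hm'
  rw [head?_sort_part hm, Option.mem_some_iff] at hx
  exact hx ▸ hlt.trans_le ((mem_minima.mp hm').2 a (Finset.mem_sort _ |>.mp ha))

lemma mem_flatten_piles {a : α} : a ∈ P.piles.flatten ↔ a ∈ s := by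
  simp only [piles, List.mem_flatten, List.mem_map, Finset.mem_sort]
  constructor
  · rintro ⟨_, ⟨m, -, rfl⟩, ha⟩
    exact P.part_subset m ((Finset.mem_sort _).mp ha)
  · intro ha
    obtain ⟨m, hm, hpart⟩ := exists_mem_minima_part_eq (P.part_mem.mpr ha)
    exact ⟨_, ⟨m, hm, rfl⟩, (Finset.mem_sort _).mpr (hpart ▸ P.mem_part_self.mpr ha)⟩

lemma nodup_flatten_piles : P.piles.flatten.Nodup := by
  refine List.nodup_flatten.mpr ⟨fun p hp => ?_, ?_⟩
  · obtain ⟨m, -, rfl⟩ := List.mem_map.mp hp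
    exact Finset.sort_nodup _ _
  refine List.pairwise_map.mpr ((Finset.sortedLT_sort _).pairwise.imp_of_mem ?_)
  intro m m' hm hm' hlt
  rw [Finset.mem_sort] at hm hm'
  have hne : P.part m ≠ P.part m' := fun h => hlt.ne (eq_of_mem_minima_of_part_eq hm hm' h)
  have hdisj := P.disjoint (P.part_mem.mpr (mem_minima.mp hm).1)
    (P.part_mem.mpr (mem_minima.mp hm').1) hne
  exact fun a ha ha' => Finset.disjoint_left.mp hdisj ((Finset.mem_sort _).mp ha)
    ((Finset.mem_sort _).mp ha')

lemma pileSet_piles : pileSet P.piles = P.parts := by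
  ext t
  simp only [pileSet, piles, List.map_map, List.mem_toFinset, List.mem_map, Finset.mem_sort,
    Function.comp_apply, Finset.sort_toFinset]
  constructor
  · rintro ⟨m, hm, rfl⟩
    exact P.part_mem.mpr (mem_minima.mp hm).1
  · exact exists_mem_minima_part_eq

end Finpartition

lemma mem_permWord {n : ℕ} (σ : Equiv.Perm (Fin n)) {a : ℕ} :
    a ∈ permWord σ ↔ a ∈ Finset.Icc 1 n := by
  simp only [permWord, List.mem_ofFn, Finset.mem_Icc]
  constructor
  · rintro ⟨i, rfl⟩
    omega
  · rintro ⟨ha, ha'⟩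
    exact ⟨σ.symm ⟨a - 1, by omega⟩, by simp; omega⟩

lemma nodup_permWord {n : ℕ} (σ : Equiv.Perm (Fin n)) : (permWord σ).Nodup :=
  List.nodup_ofFn.mpr fun _ _ h => σ.injective (Fin.val_injective (Nat.succ_injective h))

lemma exists_permWord_eq {n : ℕ} {w : List ℕ} (hw : w.Nodup)
    (hmem : ∀ a, a ∈ w ↔ a ∈ Finset.Icc 1 n) : ∃ σ : Equiv.Perm (Fin n), permWord σ = w := by
  obtain rfl : w.length = n := by
    rw [← List.toFinset_card_of_nodup hw,
      show w.toFinset = Finset.Icc 1 n from Finset.ext (by simpa using hmem), Nat.card_Icc]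
    omega
  have hbounds (i : Fin w.length) : 1 ≤ w[(i : ℕ)] ∧ w[(i : ℕ)] ≤ w.length :=
    Finset.mem_Icc.mp ((hmem _).mp (List.getElem_mem _))
  let f (i : Fin w.length) : Fin w.length := ⟨w[(i : ℕ)] - 1, by have := hbounds i; omega⟩
  have hf : Function.Injective f := fun i j h => by
    have := hbounds i; have := hbounds j
    exact Fin.ext (hw.getElem_inj_iff.mp (by simp only [f, Fin.mk.injEq] at h; omega))
  refine ⟨Equiv.ofBijective f (Finite.injective_iff_bijective.mp hf), ?_⟩
  conv_rhs => rw [← List.ofFn_getElem (xs := w)]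
  exact congrArg List.ofFn <| funext fun i => by
    have := hbounds i
    simp only [Equiv.ofBijective_apply, f]
    omega

lemma exists_PSpiles_permWord_eq_piles {n : ℕ} (P : Finpartition (Finset.Icc 1 n)) :
    ∃ σ : Equiv.Perm (Fin n), PSpiles (permWord σ) = P.piles := by
  have hPS := PSpiles_flatMap_reverse (fun _ => P.piles_ne_nil_and_pairwise_lt) P.piles_pairwise
  have hperm : P.piles.flatten.Perm (P.piles.flatMap List.reverse) := by
    simpa only [hPS] using PSpiles_flatten_perm (P.piles.flatMap List.reverse)
  obtain ⟨σ, hσ⟩ := exists_permWord_eq (hperm.nodup_iff.mp P.nodup_flatten_piles)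
    fun a => hperm.mem_iff.symm.trans P.mem_flatten_piles
  exact ⟨σ, hσ ▸ hPS⟩

lemma exists_piles_eq_PSpiles_permWord {n : ℕ} (σ : Equiv.Perm (Fin n)) :
    ∃ P : Finpartition (Finset.Icc 1 n), P.piles = PSpiles (permWord σ) := by
  have hR := isPileConfig_PSpiles (nodup_permWord σ)
  have hperm := PSpiles_flatten_perm (permWord σ)
  obtain ⟨P, hP⟩ := exists_finpartition_parts_eq_pileSet (fun p hp => (hR.1 p hp).1)
    (hperm.nodup_iff.mpr (nodup_permWord σ)) fun a => hperm.mem_iff.trans (mem_permWord σ)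
  refine ⟨P, (isPileConfig_of_pairwise (fun _ => P.piles_ne_nil_and_pairwise_lt)
    P.piles_pairwise).eq_of_pileSet_eq hR ?_⟩
  rw [P.pileSet_piles, hP]

/-- Every set partition of `{1,…,n}` arises as the set of piles of the
Patience Sorting pile configuration of some permutation; consequently, the number of
distinct pile configurations `R(σ)` as `σ` ranges over `S_n` equals the `n`-th Bell
number, i.e., the number of set partitions of `{1,…,n}`. -/
theorem stmt16 (n : ℕ) :
    (∀ P : Finpartition (Finset.Icc 1 n : Finset ℕ),
      ∃ σ : Equiv.Perm (Fin n),
        ((PSpiles (permWord σ)).map List.toFinset).toFinset = P.parts) ∧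
    Nat.card {R : List (List ℕ) // ∃ σ : Equiv.Perm (Fin n), PSpiles (permWord σ) = R} =
      Nat.card (Finpartition (Finset.Icc 1 n : Finset ℕ)) := by
  refine ⟨fun P => ?_, ?_⟩
  · obtain ⟨σ, hσ⟩ := exists_PSpiles_permWord_eq_piles P
    exact ⟨σ, hσ ▸ P.pileSet_piles⟩
  · refine (Nat.card_eq_of_bijective (fun P => ⟨P.piles, exists_PSpiles_permWord_eq_piles P⟩)
      ⟨fun P Q h => ?_, ?_⟩).symm
    · rw [Finpartition.ext_iff, ← P.pileSet_piles, ← Q.pileSet_piles]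
      exact congrArg (pileSet ∘ Subtype.val) h
    · rintro ⟨_, σ, rfl⟩
      obtain ⟨P, hP⟩ := exists_piles_eq_PSpiles_permWord σ
      exact ⟨P, Subtype.ext hP⟩
end

section
/- The set of permutations of {1,…,n} avoiding the barred pattern 3-1̄-42 coincides with the set of permutations avoiding the generalized pattern 23-1: S_n(3-1̄-42) = S_n(23-1). -/
/-- A permutation avoids the barred pattern 3-1̄-42 if and only if it
avoids the generalized pattern 23-1 (no positions `i, j` with `i + 1 < j` and
`σ(j) < σ(i) < σ(i+1)`); hence `S_n(3-1̄-42) = S_n(23-1)`. -/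
theorem stmt17 (n : ℕ) (σ : Equiv.Perm (Fin n)) :
    AvoidsBarred σ ↔
      ¬ ∃ i j : ℕ, i + 1 < j ∧ j < n ∧
        (permWord σ).getD j 0 < (permWord σ).getD i 0 ∧
        (permWord σ).getD i 0 < (permWord σ).getD (i + 1) 0 := by
  set w : ℕ → ℕ := fun m => (permWord σ).getD m 0 with hwdef
  have hww : ∀ m, (permWord σ).getD m 0 = w m := fun _ => rfl
  have hval : ∀ m (h : m < n), w m = (σ ⟨m, h⟩ : ℕ) + 1 := by
    intro m h
    have hlen : m < (permWord σ).length := by simp [permWord, h]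
    show (permWord σ).getD m 0 = _
    rw [List.getD_eq_getElem _ _ hlen]
    simp [permWord]
  have hinj : ∀ a b, a < n → b < n → w a = w b → a = b := by
    intro a b ha hb h
    rw [hval a ha, hval b hb] at h
    have := σ.injective (Fin.ext (Nat.succ_injective h))
    exact congrArg Fin.val this
  constructor
  · intro hA hocc
    have key : ∀ j, ¬ ∃ i, i + 1 < j ∧ j < n ∧ w j < w i ∧ w i < w (i+1) := by
      intro j
      induction j using Nat.strong_induction_on with
      | _ j ih =>
        rintro ⟨i, hij, hjn, h1, h2⟩
        set P : ℕ → Prop := fun b => i < b ∧ w i < w b with hP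
        have hPdec : DecidablePred P := fun b => instDecidableAnd
        have hip1 : i + 1 ≤ j - 1 := by omega
        have hspec : P (Nat.findGreatest P (j-1)) :=
          Nat.findGreatest_spec hip1 ⟨Nat.lt_succ_self i, h2⟩
        set b := Nat.findGreatest P (j-1) with hb
        have hble : b ≤ j - 1 := Nat.findGreatest_le _
        obtain ⟨hib, hwib⟩ := hspec
        have hbn : b + 1 < n := by omega
        have hwb1 : w (b+1) < w i := by
          rcases eq_or_lt_of_le (show b + 1 ≤ j by omega) with h | h
          · rw [h]; exact h1
          · have hnp : ¬ P (b+1) :=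
              Nat.findGreatest_is_greatest (Nat.lt_succ_self b) (by omega)
            have hle : w (b+1) ≤ w i := by
              by_contra hc
              exact hnp ⟨by omega, by omega⟩
            rcases eq_or_lt_of_le hle with h' | h'
            · exact absurd (hinj _ _ hbn (by omega) h') (by omega)
            · exact h'
        obtain ⟨k, hik, hkb, hwk⟩ := hA i b hib hbn hwb1 hwib
        rw [hww, hww] at hwk
        have hik1 : i + 1 < k := by
          rcases eq_or_lt_of_le (show i + 1 ≤ k by omega) with h | h
          · rw [← h] at hwk; omega
          · exact h
        exact ih k (by omega) ⟨i, hik1, by omega, by omega, h2⟩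
    obtain ⟨i, j, hij, hjn, h1, h2⟩ := hocc
    exact key j ⟨i, hij, hjn, h1, h2⟩
  · intro hno i j hij hjn h1' h2'
    have h1 : w (j + 1) < w i := h1'
    have h2 : w i < w j := h2'
    by_contra hc
    push_neg at hc
    simp only [hww] at hc
    have hasc : ∃ m, i ≤ m ∧ m + 1 ≤ j ∧ w m < w (m+1) := by
      by_contra h
      push_neg at h
      have hd : ∀ d, i + d ≤ j → w (i + d) ≤ w i := by
        intro d
        induction d with
        | zero => intro _; exact le_refl _
        | succ d ihd =>
          intro hdle
          have h1' := h (i + d) (by omega) (by omega)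
          have h2' := ihd (by omega)
          have : i + (d + 1) = (i + d) + 1 := by omega
          rw [this]
          omega
      have := hd (j - i) (by omega)
      rw [show i + (j - i) = j by omega] at this
      omega
    obtain ⟨m, him, hmj, hascm⟩ := hasc
    have hwm : w (j+1) < w m := by
      rcases eq_or_lt_of_le him with h | h
      · rw [← h]; exact h1
      · have hle := hc m h (by omega)
        rcases eq_or_lt_of_le hle with h' | h'
        · exact absurd (hinj _ _ hjn (by omega) h') (by omega)
        · exact h'
    exact hno ⟨m, j + 1, by omega, hjn, hwm, hascm⟩
end
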